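/- There exist a universal constant ε₀ > 0 and constants c(n), C(n) > 0 depending only on the dimension n such that the following holds. Let K ⊆ ℝⁿ be a bounded star-shaped domain with smooth boundary, let u : S^{n-1} → (−1, ∞) be the function with (1+u(x))x ∈ ∂K for all x ∈ S^{n-1}, and let ν : ∂K → S^{n-1} be the outer unit normal. If |ν(y) − y/|y|| < ε₀ for every y ∈ ∂K, then c(n) ∫_{S^{n-1}} |∇u|²/(1+u)² dH^{n-1} ≤ ⨍_{∂K} |ν(y) − y/|y||² dH^{n-1}(y) ≤ C(n) ∫_{S^{n-1}} |∇u|²/(1+u)² dH^{n-1}, where ⨍ denotes the average integral over ∂K. -/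

import Mathlib

open MeasureTheory Metric Set Real
open scoped ENNReal RealInnerProductSpace

noncomputable section

abbrev Euc (n : ℕ) := EuclideanSpace ℝ (Fin n)

/-- Divergence of a vector field on Euclidean space: trace of its Fréchet derivative.
For a vector field which is tangent to the unit sphere and homogeneous along rays, this
coincides on the sphere with the divergence on the sphere. -/
def divg {n : ℕ} (W : Euc n → Euc n) (x : Euc n) : ℝ :=
  LinearMap.trace ℝ (Euc n) (fderiv ℝ W x).toLinearMap

/-- Laplacian (trace of the Hessian). For a `0`-homogeneous function this coincides on the
unit sphere with the Laplace–Beltrami operator of the sphere. -/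
def lapl {n : ℕ} (u : Euc n → ℝ) (x : Euc n) : ℝ := divg (gradient u) x

/-- The Hessian of `u` as a bilinear form: `hessBil u x X Y = D²u(x)[X, Y]`. For a
`0`-homogeneous `u` and `X, Y` tangent to the unit sphere at `x`, this coincides with the
covariant Hessian of `u` on the sphere. -/
def hessBil {n : ℕ} (u : Euc n → ℝ) (x X Y : Euc n) : ℝ :=
  ⟪fderiv ℝ (gradient u) x X, Y⟫

/-- A bounded star-shaped domain with smooth boundary in `ℝⁿ`, encoded by its radial
profile `u : S^{n-1} → (-1, ∞)` (so that `(1 + u(x))·x ∈ ∂K` for `x ∈ S^{n-1}`), extended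
to `ℝⁿ \ {0}` as a `0`-homogeneous function. -/
structure StarBody (n : ℕ) where
  u : Euc n → ℝ
  smooth : ContDiffOn ℝ (⊤ : ℕ∞) u {x : Euc n | x ≠ 0}
  homog : ∀ x : Euc n, x ≠ 0 → ∀ t : ℝ, 0 < t → u (t • x) = u x
  gtNegOne : ∀ x : Euc n, -1 < u x

namespace StarBody

variable {n : ℕ} (K : StarBody n)

/-- The map `T(x) = (1 + u(x))·x` sending the unit sphere onto `∂K`. -/
def T (x : Euc n) : Euc n := (1 + K.u x) • x

/-- The star-shaped domain `K = {r·x : x ∈ S^{n-1}, 0 ≤ r < 1 + u(x)}`. -/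
def body : Set (Euc n) := {0} ∪ {y : Euc n | y ≠ 0 ∧ ‖y‖ < 1 + K.u y}

/-- The boundary `∂K = T(S^{n-1})`. -/
def bdry : Set (Euc n) := {y : Euc n | y ≠ 0 ∧ ‖y‖ = 1 + K.u y}

/-- A defining function for `K`: `K = {Fdef < 0}`, `∂K = {Fdef = 0}` (away from `0`). -/
def Fdef (y : Euc n) : ℝ := ‖y‖ - (1 + K.u y)

/-- The outer unit normal to `∂K`, extended near `∂K` as the normalized gradient of the
defining function. -/
def normal (y : Euc n) : Euc n := ‖gradient K.Fdef y‖⁻¹ • gradient K.Fdef y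

/-- The mean curvature of `∂K` (trace of the second fundamental form with respect to the
outer unit normal), computed as the divergence of the unit normal field. -/
def meanCurv (y : Euc n) : ℝ := divg K.normal y

/-- The vector field `v = ∇u/(1 + u)` (the gradient being the gradient on the sphere). -/
def v (x : Euc n) : Euc n := (1 + K.u x)⁻¹ • gradient K.u x

end StarBody

section Aux

open InnerProductSpace

variable {n : ℕ} (K : StarBody n)

lemma isOpen_ne0 : IsOpen {x : Euc n | x ≠ 0} := isOpen_compl_singleton

lemma tpos (x : Euc n) : (0:ℝ) < 1 + K.u x := by have := K.gtNegOne x; linarith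

lemma contDiffAt_u {x : Euc n} (hx : x ≠ 0) : ContDiffAt ℝ (⊤ : ℕ∞) K.u x :=
  K.smooth.contDiffAt (isOpen_ne0.mem_nhds hx)

lemma diffAt_u {x : Euc n} (hx : x ≠ 0) : DifferentiableAt ℝ K.u x :=
  (contDiffAt_u K hx).differentiableAt (by simp)

lemma toDual_gradient' (f : Euc n → ℝ) (x : Euc n) :
    toDual ℝ (Euc n) (gradient f x) = fderiv ℝ f x :=
  LinearIsometryEquiv.apply_symm_apply _ _

lemma fderiv_apply_eq_inner (f : Euc n → ℝ) (x w : Euc n) :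
    fderiv ℝ f x w = ⟪gradient f x, w⟫ := by
  rw [← toDual_gradient, toDual_apply_apply]

lemma gradient_homog {y : Euc n} (hy : y ≠ 0) {t : ℝ} (ht : 0 < t) :
    gradient K.u (t • y) = t⁻¹ • gradient K.u y := by
  have hty : t • y ≠ 0 := smul_ne_zero ht.ne' hy
  have hL : HasFDerivAt (fun z : Euc n => t • z)
      (t • ContinuousLinearMap.id ℝ (Euc n)) y := by
    exact ((ContinuousLinearMap.id ℝ (Euc n)).hasFDerivAt (x := y)).const_smul t
  have hcomp : HasFDerivAt (fun z : Euc n => K.u (t • z))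
      ((fderiv ℝ K.u (t • y)).comp (t • ContinuousLinearMap.id ℝ (Euc n))) y :=
    ((diffAt_u K hty).hasFDerivAt).comp y hL
  have heq : (fun z : Euc n => K.u (t • z)) =ᶠ[nhds y] K.u := by
    filter_upwards [isOpen_ne0.mem_nhds hy] with z hz
    exact K.homog z hz t ht
  have h2 : HasFDerivAt K.u
      ((fderiv ℝ K.u (t • y)).comp (t • ContinuousLinearMap.id ℝ (Euc n))) y :=
    hcomp.congr_of_eventuallyEq heq.symm
  have h3 := h2.fderiv
  have h4 : fderiv ℝ K.u y = t • fderiv ℝ K.u (t • y) := by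
    rw [h3]; ext w
    simp [ContinuousLinearMap.comp_apply, ContinuousLinearMap.smul_apply,
      (fderiv ℝ K.u (t • y)).map_smul]
  have h5 : fderiv ℝ K.u (t • y) = t⁻¹ • fderiv ℝ K.u y := by
    rw [h4, smul_smul, inv_mul_cancel₀ ht.ne', one_smul]
  show (toDual ℝ (Euc n)).symm (fderiv ℝ K.u (t • y)) = _
  rw [h5]
  simp [gradient, map_smulₛₗ]

lemma inner_gradient_self {y : Euc n} (hy : y ≠ 0) : ⟪gradient K.u y, y⟫ = 0 := by
  have hs : HasDerivAt (fun c : ℝ => c • y) y 1 := by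
    simpa using (hasDerivAt_id (1:ℝ)).smul_const y
  have h1 : HasDerivAt (fun c : ℝ => K.u (c • y)) (fderiv ℝ K.u ((1:ℝ) • y) y) 1 :=
    ((diffAt_u K (by simpa using hy : (1:ℝ) • y ≠ 0)).hasFDerivAt).comp_hasDerivAt 1 hs
  have h2 : HasDerivAt (fun c : ℝ => K.u (c • y)) 0 1 := by
    have hev : (fun c : ℝ => K.u (c • y)) =ᶠ[nhds 1] fun _ => K.u y := by
      filter_upwards [eventually_gt_nhds (by norm_num : (0:ℝ) < 1)] with c hc
      exact K.homog y hy c hc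
    exact (hasDerivAt_const 1 (K.u y)).congr_of_eventuallyEq hev
  have h3 := h1.unique h2
  rw [one_smul] at h3
  rw [← fderiv_apply_eq_inner, h3]

lemma hasFDerivAt_norm' {y : Euc n} (hy : y ≠ 0) :
    HasFDerivAt (fun z : Euc n => ‖z‖) (toDual ℝ (Euc n) (‖y‖⁻¹ • y)) y := by
  have hn0 : ‖y‖ ≠ 0 := norm_ne_zero_iff.2 hy
  have hn : (‖y‖:ℝ)^2 ≠ 0 := pow_ne_zero 2 hn0
  have h1 : HasFDerivAt (fun z : Euc n => ‖z‖ ^ 2) (2 • (innerSL ℝ y)) y :=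
    (hasStrictFDerivAt_norm_sq y).hasFDerivAt
  have h2 := (Real.hasDerivAt_sqrt hn).comp_hasFDerivAt y h1
  have hfun : (fun z : Euc n => Real.sqrt (‖z‖^2)) = fun z : Euc n => ‖z‖ :=
    funext fun z => Real.sqrt_sq (norm_nonneg z)
  simp only [Function.comp_def] at h2
  rw [hfun] at h2
  refine h2.congr_fderiv ?_
  refine ContinuousLinearMap.ext fun w => ?_
  rw [Real.sqrt_sq (norm_nonneg y)]
  simp [toDual_apply_apply, real_inner_smul_left]
  field_simp

lemma gradient_Fdef {y : Euc n} (hy : y ≠ 0) :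
    gradient K.Fdef y = ‖y‖⁻¹ • y - gradient K.u y := by
  have h2 : HasFDerivAt (fun z : Euc n => 1 + K.u z) (toDual ℝ (Euc n) (gradient K.u y)) y := by
    have := (diffAt_u K hy).hasGradientAt.hasFDerivAt
    exact this.const_add 1
  have h4 : HasFDerivAt K.Fdef
      (toDual ℝ (Euc n) (‖y‖⁻¹ • y - gradient K.u y)) y := by
    rw [map_sub]
    exact (hasFDerivAt_norm' hy).sub h2
  exact (HasGradientAt.gradient h4)

end Aux
section Geometry

open InnerProductSpace

variable {n : ℕ} (K : StarBody n)

lemma sphere_ne0 {x : Euc n} (hx : x ∈ sphere (0 : Euc n) 1) : x ≠ 0 := by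
  have : ‖x‖ = 1 := by simpa using hx
  intro h; rw [h] at this; simp at this

lemma norm_of_sphere {x : Euc n} (hx : x ∈ sphere (0 : Euc n) 1) : ‖x‖ = 1 := by
  simpa using hx

lemma u_T {x : Euc n} (hx : x ≠ 0) : K.u (K.T x) = K.u x :=
  K.homog x hx _ (tpos K x)

lemma norm_T {x : Euc n} (hx : ‖x‖ = 1) : ‖K.T x‖ = 1 + K.u x := by
  rw [StarBody.T, norm_smul, hx, mul_one, Real.norm_eq_abs, abs_of_pos (tpos K x)]

lemma T_ne0 {x : Euc n} (hx : ‖x‖ = 1) : K.T x ≠ 0 := by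
  intro h
  have := norm_T K hx
  rw [h, norm_zero] at this
  exact absurd this.symm (tpos K x).ne'

lemma T_mem_bdry {x : Euc n} (hx : ‖x‖ = 1) : K.T x ∈ K.bdry := by
  refine ⟨T_ne0 K hx, ?_⟩
  rw [norm_T K hx, u_T K (by intro h; rw [h, norm_zero] at hx; norm_num at hx)]

lemma P_T {x : Euc n} (hx : ‖x‖ = 1) : ‖K.T x‖⁻¹ • K.T x = x := by
  rw [norm_T K hx, StarBody.T, smul_smul, inv_mul_cancel₀ (tpos K x).ne', one_smul]

lemma u_P {y : Euc n} (hy : y ≠ 0) : K.u (‖y‖⁻¹ • y) = K.u y :=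
  K.homog y hy _ (inv_pos.2 (norm_pos_iff.2 hy))

lemma P_mem_sphere {y : Euc n} (hy : y ≠ 0) : ‖y‖⁻¹ • y ∈ sphere (0 : Euc n) 1 := by
  simp only [mem_sphere_iff_norm, sub_zero, norm_smul, norm_inv, norm_norm]
  rw [inv_mul_cancel₀ (norm_ne_zero_iff.2 hy)]

lemma T_P {y : Euc n} (hy : y ∈ K.bdry) : K.T (‖y‖⁻¹ • y) = y := by
  rw [StarBody.T, u_P K hy.1, ← hy.2, smul_smul, mul_inv_cancel₀ (norm_ne_zero_iff.2 hy.1),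
    one_smul]

lemma bdry_eq_image : K.bdry = K.T '' (sphere (0 : Euc n) 1) := by
  ext y
  constructor
  · intro hy
    exact ⟨‖y‖⁻¹ • y, P_mem_sphere hy.1, T_P K hy⟩
  · rintro ⟨x, hx, rfl⟩
    exact T_mem_bdry K (norm_of_sphere hx)

/-- The pointwise formula for the deviation of the normal. -/
lemma normal_dev_eq {x : Euc n} (hx : ‖x‖ = 1) :
    ‖K.normal (K.T x) - ‖K.T x‖⁻¹ • K.T x‖ ^ 2
      = 2 - 2 / Real.sqrt (1 + ‖gradient K.u x‖ ^ 2 / (1 + K.u x) ^ 2) := by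
  have hx0 : x ≠ 0 := by intro h; rw [h, norm_zero] at hx; norm_num at hx
  set t : ℝ := 1 + K.u x with ht
  have htpos : 0 < t := tpos K x
  set v : Euc n := t⁻¹ • gradient K.u x with hv
  have hgv : ‖gradient K.u x‖ ^ 2 / (1 + K.u x) ^ 2 = ‖v‖ ^ 2 := by
    rw [hv, norm_smul, norm_inv, Real.norm_eq_abs, abs_of_pos htpos, mul_pow, ← ht]
    field_simp
  have hy0 : K.T x ≠ 0 := T_ne0 K hx
  have hPT : ‖K.T x‖⁻¹ • K.T x = x := P_T K hx
  have hTx : K.T x = t • x := rfl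
  have hgradU : gradient K.u (K.T x) = v := by
    rw [hTx, gradient_homog K hx0 htpos, hv]
  have hgradF : gradient K.Fdef (K.T x) = x - v := by
    rw [gradient_Fdef K hy0, hPT, hgradU]
  have hvx : ⟪v, x⟫ = 0 := by
    rw [hv, real_inner_smul_left, inner_gradient_self K hx0, mul_zero]
  have hxv : ⟪x, v⟫ = 0 := by rw [real_inner_comm]; exact hvx
  have hnormsq : ‖x - v‖ ^ 2 = 1 + ‖v‖ ^ 2 := by
    rw [norm_sub_sq_real, hxv, hx]; ring
  have h1v : (0:ℝ) < 1 + ‖v‖ ^ 2 := by positivity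
  set r : ℝ := ‖x - v‖ with hr
  have hrpos : 0 < r := by
    rw [hr]; rw [← Real.sqrt_sq (norm_nonneg (x - v))] at *
    have : r ^ 2 = 1 + ‖v‖ ^ 2 := hnormsq
    nlinarith [norm_nonneg (x - v), sq_nonneg (‖v‖)]
  have hrs : r = Real.sqrt (1 + ‖v‖ ^ 2) := by
    rw [← hnormsq, hr, Real.sqrt_sq (norm_nonneg _)]
  have hnormal : K.normal (K.T x) = r⁻¹ • (x - v) := by
    rw [StarBody.normal, hgradF]
  rw [hnormal, hPT, hgv, ← hrs]
  have hinner : ⟪x - v, x⟫ = 1 := by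
    rw [inner_sub_left, hvx, real_inner_self_eq_norm_sq, hx]; ring
  rw [norm_sub_sq_real, real_inner_smul_left, hinner, norm_smul, norm_inv,
    Real.norm_eq_abs, abs_of_pos hrpos, ← hr, inv_mul_cancel₀ hrpos.ne', hx]
  ring

end Geometry

section Phi

lemma phi_le {g : ℝ} (hg : 0 ≤ g) : 2 - 2 / Real.sqrt (1 + g) ≤ g := by
  set s := Real.sqrt (1 + g) with hs
  have hs2 : s ^ 2 = 1 + g := Real.sq_sqrt (by linarith)
  have hs1 : 1 ≤ s := by
    rw [hs]
    simpa using Real.sqrt_le_sqrt (by linarith : (1:ℝ) ≤ 1 + g)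
  have hq : (2 / s) * s = 2 := div_mul_cancel₀ 2 (by linarith)
  nlinarith [mul_nonneg (sq_nonneg (s - 1)) (by linarith : (0:ℝ) ≤ s + 2)]

lemma phi_ge {g : ℝ} (hg : 0 ≤ g) (hg1 : g ≤ 1) : g / 2 ≤ 2 - 2 / Real.sqrt (1 + g) := by
  set s := Real.sqrt (1 + g) with hs
  have hs2 : s ^ 2 = 1 + g := Real.sq_sqrt (by linarith)
  have hs1 : 1 ≤ s := by
    rw [hs]
    simpa using Real.sqrt_le_sqrt (by linarith : (1:ℝ) ≤ 1 + g)
  have hsu : s ≤ 3/2 := by nlinarith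
  have hq : (2 / s) * s = 2 := div_mul_cancel₀ 2 (by linarith)
  nlinarith [mul_nonneg (by linarith : (0:ℝ) ≤ s - 1) (by nlinarith : (0:ℝ) ≤ 4 - s^2 - s)]

lemma phi_small {g : ℝ} (hg : 0 ≤ g) (h : 2 - 2 / Real.sqrt (1 + g) < 1/4) : g ≤ 1 := by
  set s := Real.sqrt (1 + g) with hs
  have hs2 : s ^ 2 = 1 + g := Real.sq_sqrt (by linarith)
  have hs1 : 1 ≤ s := by
    rw [hs]
    simpa using Real.sqrt_le_sqrt (by linarith : (1:ℝ) ≤ 1 + g)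
  have hq : (2 / s) * s = 2 := div_mul_cancel₀ 2 (by linarith)
  have h74 : (7/4 : ℝ) < 2 / s := by linarith
  have hss : s < 8/7 := by nlinarith
  nlinarith

end Phi
section Osc

open InnerProductSpace

variable {n : ℕ} (K : StarBody n)

lemma hasDerivAt_along (w x : Euc n) {s : ℝ} (h : x + s • w ≠ 0) :
    HasDerivAt (fun s : ℝ => K.u (x + s • w)) (fderiv ℝ K.u (x + s • w) w) s := by
  have hl : HasDerivAt (fun s : ℝ => x + s • w) w s := by
    simpa using ((hasDerivAt_id s).smul_const w).const_add x
  exact ((diffAt_u K h).hasFDerivAt).comp_hasDerivAt s hl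

lemma seg_norm {x x' : Euc n} (hx : ‖x‖ = 1) (hx' : ‖x'‖ = 1) (hin : 0 ≤ ⟪x,x'⟫)
    {s : ℝ} (hs : s ∈ Set.Icc (0:ℝ) 1) :
    x + s • (x' - x) ≠ 0 ∧ ‖x + s • (x' - x)‖⁻¹ ≤ Real.sqrt 2 := by
  have hid : x + s • (x' - x) = (1 - s) • x + s • x' := by
    rw [smul_sub, sub_smul, one_smul]; abel
  have h1 : (0:ℝ) ≤ ⟪(1-s) • x, s • x'⟫ := by
    rw [real_inner_smul_left, real_inner_smul_right]
    have h2 := hs.1; have h3 := hs.2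
    exact mul_nonneg (by linarith) (mul_nonneg h2 hin)
  have h2 : ‖(1-s) • x + s • x'‖^2 = (1-s)^2 + 2*⟪(1-s)•x, s•x'⟫ + s^2 := by
    rw [norm_add_sq_real, norm_smul, norm_smul, hx, hx', Real.norm_eq_abs, Real.norm_eq_abs,
      mul_one, mul_one, sq_abs, sq_abs]
  have h3 : 1/2 ≤ ‖(1-s)•x + s•x'‖^2 := by
    rw [h2]; nlinarith [h1, sq_nonneg (1 - 2*s)]
  rw [hid]
  set N := ‖(1-s)•x + s•x'‖ with hN
  have hNpos : 0 < N := by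
    have := norm_nonneg ((1-s)•x + s•x')
    by_contra hcon
    push_neg at hcon
    have : N = 0 := le_antisymm hcon this
    rw [this] at h3; norm_num at h3
  constructor
  · rw [← norm_pos_iff]; exact hNpos
  · have hone : (1:ℝ) ≤ Real.sqrt 2 * N := by
      nlinarith [Real.sq_sqrt (by norm_num : (2:ℝ) ≥ 0), Real.sqrt_nonneg 2,
        sq_nonneg (Real.sqrt 2 * N - 1)]
    have : (1:ℝ)/N ≤ Real.sqrt 2 := (div_le_iff₀ hNpos).2 (by linarith)
    rwa [one_div] at this

lemma norm_sub_le_sqrt_two {x x' : Euc n} (hx : ‖x‖ = 1) (hx' : ‖x'‖ = 1)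
    (hin : 0 ≤ ⟪x,x'⟫) : ‖x' - x‖ ≤ Real.sqrt 2 := by
  have h2 : ‖x' - x‖^2 = 2 - 2*⟪x',x⟫ := by
    rw [norm_sub_sq_real, hx, hx']; ring
  have hin' : 0 ≤ ⟪x',x⟫ := by rwa [real_inner_comm]
  nlinarith [norm_nonneg (x' - x), Real.sq_sqrt (by norm_num : (2:ℝ) ≥ 0),
    Real.sqrt_nonneg 2, sq_nonneg (Real.sqrt 2 - ‖x' - x‖), sq_nonneg (Real.sqrt 2 + ‖x' - x‖)]

/-- Mean value estimate for `log (1+u)` along a segment between two unit vectors with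
nonnegative inner product, given the gradient bound. -/
lemma log_osc_seg (hb : ∀ z : Euc n, z ≠ 0 → ‖gradient K.u z‖ * ‖z‖ ≤ 1 + K.u z)
    {x x' : Euc n} (hx : ‖x‖ = 1) (hx' : ‖x'‖ = 1) (hin : 0 ≤ ⟪x,x'⟫) :
    |Real.log (1 + K.u x') - Real.log (1 + K.u x)| ≤ 2 := by
  set w := x' - x with hw
  set f : ℝ → ℝ := fun s => Real.log (1 + K.u (x + s • w)) with hf
  set f' : ℝ → ℝ := fun s => (fderiv ℝ K.u (x + s • w) w) / (1 + K.u (x + s • w)) with hf'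
  have key : ∀ s ∈ Set.Icc (0:ℝ) 1, HasDerivWithinAt f (f' s) (Set.Icc (0:ℝ) 1) s := by
    intro s hs
    obtain ⟨hne, _⟩ := seg_norm hx hx' hin hs
    have h1 : HasDerivAt (fun s : ℝ => 1 + K.u (x + s • w)) (fderiv ℝ K.u (x + s • w) w) s :=
      (hasDerivAt_along K w x hne).const_add 1
    have h2 := h1.log (tpos K _).ne'
    exact h2.hasDerivWithinAt
  have bound : ∀ s ∈ Set.Icc (0:ℝ) 1, ‖f' s‖ ≤ 2 := by
    intro s hs
    obtain ⟨hne, hinv⟩ := seg_norm hx hx' hin hs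
    set z := x + s • w with hz
    have hfd : |fderiv ℝ K.u z w| ≤ ‖gradient K.u z‖ * ‖w‖ := by
      rw [fderiv_apply_eq_inner]
      exact abs_real_inner_le_norm _ _
    have hgb : ‖gradient K.u z‖ ≤ ‖z‖⁻¹ * (1 + K.u z) := by
      have h3 := hb z hne
      have hzpos : 0 < ‖z‖ := norm_pos_iff.2 hne
      rw [← mul_le_mul_iff_left₀ hzpos]
      calc ‖gradient K.u z‖ * ‖z‖ ≤ 1 + K.u z := h3
        _ = ‖z‖⁻¹ * (1 + K.u z) * ‖z‖ := by field_simp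
    have hw2 : ‖w‖ ≤ Real.sqrt 2 := norm_sub_le_sqrt_two hx hx' hin
    have htp : 0 < 1 + K.u z := tpos K z
    have h4 : |fderiv ℝ K.u z w| ≤ 2 * (1 + K.u z) := by
      have h5 : ‖gradient K.u z‖ * ‖w‖ ≤ (‖z‖⁻¹ * (1 + K.u z)) * Real.sqrt 2 :=
        mul_le_mul hgb hw2 (norm_nonneg _) (by positivity)
      have h6 : (‖z‖⁻¹ * (1 + K.u z)) * Real.sqrt 2 ≤ (Real.sqrt 2 * (1 + K.u z)) * Real.sqrt 2 := by
        have := mul_le_mul_of_nonneg_right hinv htp.le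
        nlinarith [Real.sqrt_nonneg 2]
      have h7 : (Real.sqrt 2 * (1 + K.u z)) * Real.sqrt 2 = 2 * (1 + K.u z) := by
        rw [show Real.sqrt 2 * (1 + K.u z) * Real.sqrt 2
            = (Real.sqrt 2 * Real.sqrt 2) * (1 + K.u z) by ring,
          Real.mul_self_sqrt (by norm_num)]
      linarith [hfd.trans (h5.trans (h6.trans_eq h7))]
    rw [hf', Real.norm_eq_abs, abs_div, abs_of_pos htp, div_le_iff₀ htp]
    linarith
  have := Convex.norm_image_sub_le_of_norm_hasDerivWithin_le key bound (convex_Icc 0 1)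
    (Set.left_mem_Icc.2 zero_le_one) (Set.right_mem_Icc.2 zero_le_one)
  have h0 : f 0 = Real.log (1 + K.u x) := by simp [hf]
  have h1 : f 1 = Real.log (1 + K.u x') := by
    show Real.log (1 + K.u (x + (1:ℝ) • w)) = _
    rw [one_smul, hw, show x + (x' - x) = x' by abel]
  rw [Real.norm_eq_abs, h0, h1] at this
  simpa using this

lemma exists_orth (hn : 2 ≤ n) (x : Euc n) (hx : ‖x‖ = 1) :
    ∃ z : Euc n, ‖z‖ = 1 ∧ ⟪x, z⟫ = 0 := by
  have hx0 : x ≠ 0 := by intro h; rw [h, norm_zero] at hx; norm_num at hx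
  have hbot : (ℝ ∙ x)ᗮ ≠ ⊥ := by
    intro hb0
    have h1 : (ℝ ∙ x) = ⊤ := by
      rwa [Submodule.orthogonal_eq_bot_iff] at hb0
    have h2 : Module.finrank ℝ (Euc n) = 1 := by
      rw [← finrank_span_singleton (K := ℝ) hx0, h1, finrank_top]
    rw [finrank_euclideanSpace_fin] at h2
    omega
  obtain ⟨z', hz'mem, hz'0⟩ := Submodule.exists_mem_ne_zero_of_ne_bot hbot
  refine ⟨‖z'‖⁻¹ • z', ?_, ?_⟩
  · rw [norm_smul, norm_inv, norm_norm, inv_mul_cancel₀ (norm_ne_zero_iff.2 hz'0)]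
  · rw [real_inner_smul_right]
    have := (Submodule.mem_orthogonal _ _).1 hz'mem x (Submodule.mem_span_singleton_self x)
    rw [this, mul_zero]

lemma log_osc (hn : 2 ≤ n) (hb : ∀ z : Euc n, z ≠ 0 → ‖gradient K.u z‖ * ‖z‖ ≤ 1 + K.u z)
    {x x' : Euc n} (hx : ‖x‖ = 1) (hx' : ‖x'‖ = 1) :
    |Real.log (1 + K.u x') - Real.log (1 + K.u x)| ≤ 4 := by
  by_cases hin : 0 ≤ ⟪x, x'⟫
  · linarith [log_osc_seg K hb hx hx' hin]
  push_neg at hin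
  by_cases hsum : x + x' = 0
  · obtain ⟨z, hz1, hz2⟩ := exists_orth hn x hx
    have hx'z : ⟪z, x'⟫ = 0 := by
      have hx'eq : x' = -x := eq_neg_of_add_eq_zero_right hsum
      rw [hx'eq, inner_neg_right, real_inner_comm, hz2, neg_zero]
    have e1 := log_osc_seg K hb hx hz1 (le_of_eq hz2.symm)
    have e2 := log_osc_seg K hb hz1 hx' (le_of_eq hx'z.symm)
    calc |Real.log (1 + K.u x') - Real.log (1 + K.u x)|
        ≤ |Real.log (1 + K.u x') - Real.log (1 + K.u z)|
          + |Real.log (1 + K.u z) - Real.log (1 + K.u x)| := abs_sub_le _ _ _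
      _ ≤ 4 := by linarith
  · set z := ‖x + x'‖⁻¹ • (x + x') with hzdef
    have hz1 : ‖z‖ = 1 := by
      rw [hzdef, norm_smul, norm_inv, norm_norm, inv_mul_cancel₀ (norm_ne_zero_iff.2 hsum)]
    have habs : |⟪x, x'⟫| ≤ 1 := by
      have := abs_real_inner_le_norm x x'
      rwa [hx, hx', mul_one] at this
    obtain ⟨habs1, habs2⟩ := abs_le.1 habs
    have hinv : (0:ℝ) ≤ ‖x + x'‖⁻¹ := by positivity
    have hxz : 0 ≤ ⟪x, z⟫ := by
      rw [hzdef, real_inner_smul_right, inner_add_right, real_inner_self_eq_norm_sq, hx]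
      exact mul_nonneg hinv (by nlinarith)
    have hzx' : 0 ≤ ⟪z, x'⟫ := by
      rw [hzdef, real_inner_smul_left, inner_add_left, real_inner_self_eq_norm_sq, hx']
      exact mul_nonneg hinv (by nlinarith)
    have e1 := log_osc_seg K hb hx hz1 hxz
    have e2 := log_osc_seg K hb hz1 hx' hzx'
    calc |Real.log (1 + K.u x') - Real.log (1 + K.u x)|
        ≤ |Real.log (1 + K.u x') - Real.log (1 + K.u z)|
          + |Real.log (1 + K.u z) - Real.log (1 + K.u x)| := abs_sub_le _ _ _
      _ ≤ 4 := by linarith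

end Osc
section Lip

open InnerProductSpace

variable {n : ℕ} (K : StarBody n)

lemma grad_bound_all (hS : ∀ x : Euc n, ‖x‖ = 1 → ‖gradient K.u x‖ ≤ 1 + K.u x) :
    ∀ z : Euc n, z ≠ 0 → ‖gradient K.u z‖ * ‖z‖ ≤ 1 + K.u z := by
  intro z hz
  have hz0 : 0 < ‖z‖ := norm_pos_iff.2 hz
  have hgi : gradient K.u (‖z‖⁻¹ • z) = ‖z‖ • gradient K.u z := by
    rw [gradient_homog K hz (inv_pos.2 hz0), inv_inv]
  have h1 := hS _ (norm_of_sphere (P_mem_sphere hz))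
  rw [hgi, norm_smul, Real.norm_eq_abs, abs_of_pos hz0, u_P K hz] at h1
  linarith [h1, mul_comm ‖z‖ ‖gradient K.u z‖]

lemma u_lip (M : ℝ) (hM0 : 0 < M) (hS : ∀ x : Euc n, ‖x‖ = 1 → ‖gradient K.u x‖ ≤ 1 + K.u x)
    (hMb : ∀ x : Euc n, ‖x‖ = 1 → 1 + K.u x ≤ M)
    {x x' : Euc n} (hx : ‖x‖ = 1) (hx' : ‖x'‖ = 1) :
    |K.u x' - K.u x| ≤ 2 * M * ‖x' - x‖ := by
  have hb := grad_bound_all K hS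
  by_cases hd : ‖x' - x‖ ≤ 1
  · have hsq : ‖x' - x‖^2 = 2 - 2*⟪x',x⟫ := by
      rw [norm_sub_sq_real, hx, hx']; ring
    have hin : 0 ≤ ⟪x, x'⟫ := by
      rw [real_inner_comm]
      have h5 : ‖x' - x‖^2 ≤ 1 := by nlinarith [norm_nonneg (x' - x)]
      linarith
    set w := x' - x with hw
    set f : ℝ → ℝ := fun s => K.u (x + s • w) with hf
    set f' : ℝ → ℝ := fun s => fderiv ℝ K.u (x + s • w) w with hf'
    have key : ∀ s ∈ Set.Icc (0:ℝ) 1, HasDerivWithinAt f (f' s) (Set.Icc (0:ℝ) 1) s := by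
      intro s hs
      obtain ⟨hne, _⟩ := seg_norm hx hx' hin hs
      exact (hasDerivAt_along K w x hne).hasDerivWithinAt
    have bound : ∀ s ∈ Set.Icc (0:ℝ) 1, ‖f' s‖ ≤ 2 * M * ‖w‖ := by
      intro s hs
      obtain ⟨hne, hinv⟩ := seg_norm hx hx' hin hs
      set z := x + s • w with hz
      have hfd : |fderiv ℝ K.u z w| ≤ ‖gradient K.u z‖ * ‖w‖ := by
        rw [fderiv_apply_eq_inner]; exact abs_real_inner_le_norm _ _
      have hzpos : 0 < ‖z‖ := norm_pos_iff.2 hne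
      have hgb : ‖gradient K.u z‖ ≤ ‖z‖⁻¹ * (1 + K.u z) := by
        have h3 := hb z hne
        rw [← mul_le_mul_iff_left₀ hzpos]
        calc ‖gradient K.u z‖ * ‖z‖ ≤ 1 + K.u z := h3
          _ = ‖z‖⁻¹ * (1 + K.u z) * ‖z‖ := by field_simp
      have huz : 1 + K.u z ≤ M := by
        rw [← u_P K hne]
        exact hMb _ (norm_of_sphere (P_mem_sphere hne))
      have hsqrt2 : Real.sqrt 2 ≤ 2 := by
        nlinarith [Real.sq_sqrt (by norm_num : (2:ℝ) ≥ 0), Real.sqrt_nonneg 2]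
      have htp : 0 < 1 + K.u z := tpos K z
      rw [hf', Real.norm_eq_abs]
      calc |fderiv ℝ K.u z w| ≤ ‖gradient K.u z‖ * ‖w‖ := hfd
        _ ≤ (‖z‖⁻¹ * (1 + K.u z)) * ‖w‖ :=
            mul_le_mul_of_nonneg_right hgb (norm_nonneg _)
        _ ≤ (2 * M) * ‖w‖ := by
            apply mul_le_mul_of_nonneg_right _ (norm_nonneg _)
            calc ‖z‖⁻¹ * (1 + K.u z) ≤ Real.sqrt 2 * M := by
                  apply mul_le_mul hinv huz htp.le (Real.sqrt_nonneg 2)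
              _ ≤ 2 * M := mul_le_mul_of_nonneg_right hsqrt2 hM0.le
    have hmv := Convex.norm_image_sub_le_of_norm_hasDerivWithin_le key bound (convex_Icc 0 1)
      (Set.left_mem_Icc.2 zero_le_one) (Set.right_mem_Icc.2 zero_le_one)
    have h0 : f 0 = K.u x := by simp [hf]
    have h1 : f 1 = K.u x' := by
      show K.u (x + (1:ℝ) • w) = _
      rw [one_smul, hw, show x + (x' - x) = x' by abel]
    rw [Real.norm_eq_abs, h0, h1] at hmv
    simpa using hmv
  · push_neg at hd
    have h1 := tpos K x
    have h2 := tpos K x'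
    have h3 := hMb x hx
    have h4 := hMb x' hx'
    rw [abs_le]
    constructor <;> nlinarith

lemma P_sub_le {y z : Euc n} {r : ℝ} (hr : 0 < r) (h1 : r ≤ ‖y‖) (h2 : r ≤ ‖z‖) :
    ‖‖y‖⁻¹ • y - ‖z‖⁻¹ • z‖ ≤ (2/r) * ‖y - z‖ := by
  have hyp : 0 < ‖y‖ := lt_of_lt_of_le hr h1
  have hzp : 0 < ‖z‖ := lt_of_lt_of_le hr h2
  have hid : ‖y‖⁻¹ • y - ‖z‖⁻¹ • z = ‖y‖⁻¹ • (y - z) + (‖y‖⁻¹ - ‖z‖⁻¹) • z := by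
    rw [smul_sub, sub_smul]; abel
  have habs : |‖y‖⁻¹ - ‖z‖⁻¹| * ‖z‖ = |‖z‖ - ‖y‖| / ‖y‖ := by
    rw [show ‖y‖⁻¹ - ‖z‖⁻¹ = (‖z‖ - ‖y‖) / (‖y‖ * ‖z‖) by field_simp,
      abs_div, abs_of_pos (mul_pos hyp hzp)]
    field_simp
  have hns : |‖z‖ - ‖y‖| ≤ ‖y - z‖ := by
    rw [← norm_sub_rev]
    exact abs_norm_sub_norm_le z y
  calc ‖‖y‖⁻¹ • y - ‖z‖⁻¹ • z‖
      ≤ ‖‖y‖⁻¹ • (y - z)‖ + ‖(‖y‖⁻¹ - ‖z‖⁻¹) • z‖ := by rw [hid]; exact norm_add_le _ _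
    _ = ‖y‖⁻¹ * ‖y - z‖ + |‖y‖⁻¹ - ‖z‖⁻¹| * ‖z‖ := by
        rw [norm_smul, norm_smul, norm_inv, norm_norm, Real.norm_eq_abs]
    _ ≤ r⁻¹ * ‖y - z‖ + r⁻¹ * ‖y - z‖ := by
        have t1 : ‖y‖⁻¹ * ‖y - z‖ ≤ r⁻¹ * ‖y - z‖ :=
          mul_le_mul_of_nonneg_right (inv_anti₀ hr h1) (norm_nonneg _)
        have t2 : |‖y‖⁻¹ - ‖z‖⁻¹| * ‖z‖ ≤ r⁻¹ * ‖y - z‖ := by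
          rw [habs]
          calc |‖z‖ - ‖y‖| / ‖y‖ ≤ ‖y - z‖ / ‖y‖ := by gcongr
            _ ≤ ‖y - z‖ / r := by gcongr
            _ = r⁻¹ * ‖y - z‖ := by rw [div_eq_inv_mul]
        linarith
    _ = (2/r) * ‖y - z‖ := by field_simp; ring

end Lip
section SphereMeasure

open scoped NNReal

set_option maxHeartbeats 1000000

lemma coord_le_norm {m : ℕ} (x : Euc m) (i : Fin m) : |x i| ≤ ‖x‖ := by
  rw [EuclideanSpace.norm_eq]
  have h1 : |x i| = Real.sqrt (|x i|^2) := by rw [Real.sqrt_sq_eq_abs, abs_abs]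
  rw [h1]
  apply Real.sqrt_le_sqrt
  have := Finset.single_le_sum (f := fun j => ‖x j‖^2)
    (fun j _ => by positivity) (Finset.mem_univ i)
  simpa [Real.norm_eq_abs] using this

lemma lipschitzOnWith_P {m : ℕ} {r : ℝ≥0} (hr : 0 < r) :
    LipschitzOnWith (2/r) (fun y : Euc m => ‖y‖⁻¹ • y) {y : Euc m | (r:ℝ) ≤ ‖y‖} := by
  rw [lipschitzOnWith_iff_dist_le_mul]
  intro y hy z hz
  rw [dist_eq_norm, dist_eq_norm]
  have h := P_sub_le (n := m) (r := (r:ℝ)) (by exact_mod_cast hr) hy hz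
  calc ‖‖y‖⁻¹ • y - ‖z‖⁻¹ • z‖ ≤ (2/(r:ℝ)) * ‖y - z‖ := h
    _ = ((2/r : ℝ≥0) : ℝ) * ‖y - z‖ := by push_cast; ring

lemma P_smul_sphere {m : ℕ} {x : Euc m} (hx : ‖x‖ = 1) {c : ℝ} (hc : 0 < c) :
    ‖c • x‖⁻¹ • (c • x) = x := by
  rw [norm_smul, Real.norm_eq_abs, abs_of_pos hc, hx, mul_one, smul_smul,
    inv_mul_cancel₀ hc.ne', one_smul]

lemma sphere_hm_lt_top (e : ℕ) : μH[(e:ℝ)] (sphere (0 : Euc (e+1)) 1) < ⊤ := by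
  classical
  set d : ℝ := (e : ℝ) with hd
  have hd0 : 0 ≤ d := by positivity
  -- the cube in the sup-metric pi space
  set Q : Set (Fin e → ℝ) := Set.pi Set.univ (fun _ => Set.Icc (-1:ℝ) 1) with hQ
  have hQcompact : IsCompact Q := isCompact_univ_pi (fun _ => isCompact_Icc)
  have hQvol : μH[d] Q < ⊤ := by
    have hpi0 : (μH[d] : Measure (Fin e → ℝ)) = volume := by
      rw [hd]
      simpa [Fintype.card_fin] using (hausdorffMeasure_pi_real (ι := Fin e))
    rw [hpi0]
    exact hQcompact.measure_lt_top
  -- the face maps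
  set sgn : Bool → ℝ := fun b => if b then 1 else -1 with hsgn
  have hsgnabs : ∀ b, |sgn b| = 1 := by intro b; cases b <;> simp [hsgn]
  set ι : Fin (e+1) → Bool → (Fin e → ℝ) → Euc (e+1) :=
    fun i b z => (WithLp.equiv 2 (Fin (e+1) → ℝ)).symm (i.insertNth (sgn b) z) with hι
  have hιcoord : ∀ i b z, (ι i b z) i = sgn b := by
    intro i b z
    simp [hι, PiLp.toLp_apply, Fin.insertNth_apply_same]
  have hιlip : ∀ i b, LipschitzWith (Real.toNNReal (Real.sqrt e)) (ι i b) := by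
    intro i b
    apply LipschitzWith.of_dist_le_mul
    intro z z'
    rw [EuclideanSpace.dist_eq]
    have hsum : ∑ k : Fin (e+1), dist ((ι i b z) k) ((ι i b z') k) ^ 2
        = ∑ j : Fin e, dist (z j) (z' j) ^ 2 := by
      rw [Fin.sum_univ_succAbove _ i]
      simp [hι, PiLp.toLp_apply, Fin.insertNth_apply_same,
        Fin.insertNth_apply_succAbove, dist_self]
    rw [hsum]
    have hle : ∑ j : Fin e, dist (z j) (z' j) ^ 2 ≤ (e : ℝ) * dist z z' ^ 2 := by
      calc ∑ j : Fin e, dist (z j) (z' j) ^ 2 ≤ ∑ _j : Fin e, dist z z' ^ 2 := by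
            apply Finset.sum_le_sum
            intro j _
            have := dist_le_pi_dist z z' j
            have h0 := dist_nonneg (x := z j) (y := z' j)
            nlinarith
        _ = (e : ℝ) * dist z z' ^ 2 := by simp [mul_comm]
    calc Real.sqrt (∑ j : Fin e, dist (z j) (z' j) ^ 2)
        ≤ Real.sqrt ((e:ℝ) * dist z z' ^ 2) := Real.sqrt_le_sqrt hle
      _ = Real.sqrt e * dist z z' := by
          rw [Real.sqrt_mul (by positivity), Real.sqrt_sq dist_nonneg]
      _ = (Real.toNNReal (Real.sqrt e) : ℝ) * dist z z' := by
          rw [Real.coe_toNNReal _ (Real.sqrt_nonneg _)]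
  have hmaps : ∀ i b, Set.MapsTo (ι i b) Q {y : Euc (e+1) | ((1:ℝ≥0):ℝ) ≤ ‖y‖} := by
    intro i b z _
    have h1 : |(ι i b z) i| ≤ ‖ι i b z‖ := coord_le_norm _ _
    rw [hιcoord, hsgnabs] at h1
    simpa using h1
  set Φ : Fin (e+1) → Bool → (Fin e → ℝ) → Euc (e+1) :=
    fun i b z => ‖ι i b z‖⁻¹ • (ι i b z) with hΦ
  have hΦlip : ∀ i b, LipschitzOnWith ((2/1) * Real.toNNReal (Real.sqrt e)) (Φ i b) Q := by
    intro i b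
    exact (lipschitzOnWith_P (m := e+1) (r := 1) one_pos).comp
      (hιlip i b).lipschitzOnWith (hmaps i b)
  have hcover : sphere (0 : Euc (e+1)) 1 ⊆
      ⋃ p : Fin (e+1) × Bool, Φ p.1 p.2 '' Q := by
    intro x hx
    have hx1 : ‖x‖ = 1 := by simpa using hx
    obtain ⟨i, -, hi⟩ := Finset.exists_max_image Finset.univ (fun j => |x j|)
      ⟨0, Finset.mem_univ 0⟩
    have hxi : x i ≠ 0 := by
      intro h0
      have hz : ∀ j, x j = 0 := by
        intro j
        have := hi j (Finset.mem_univ j)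
        rw [h0] at this
        simpa using abs_nonpos_iff.1 (by simpa using this)
      have : x = 0 := by
        ext j; exact hz j
      rw [this, norm_zero] at hx1; norm_num at hx1
    have habs : 0 < |x i| := abs_pos.2 hxi
    set b : Bool := decide (0 < x i) with hb
    set w : Fin (e+1) → ℝ := fun j => |x i|⁻¹ * x j with hw
    have hwi : w i = sgn b := by
      rcases lt_trichotomy (x i) 0 with h | h | h
      · have : b = false := by simp [hb]; linarith
        rw [this, hw]
        simp only [hsgn, Bool.false_eq_true, if_false]
        rw [abs_of_neg h]
        field_simp
      · exact absurd h hxi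
      · have : b = true := by simp [hb, h]
        rw [this, hw]
        simp only [hsgn, if_true]
        rw [abs_of_pos h]
        field_simp
    set z : Fin e → ℝ := i.removeNth w with hz
    have hzQ : z ∈ Q := by
      intro j _
      have hj := hi (i.succAbove j) (Finset.mem_univ _)
      have : |z j| ≤ 1 := by
        rw [hz, Fin.removeNth, hw]
        rw [abs_mul, abs_inv, abs_abs]
        rw [inv_mul_le_iff₀ habs]
        simpa using hj
      rw [Set.mem_Icc]
      rw [abs_le] at this
      exact this
    have hinsert : i.insertNth (sgn b) z = w := by
      rw [← hwi, hz]
      exact Fin.insertNth_self_removeNth i w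
    have hιz : ι i b z = |x i|⁻¹ • x := by
      rw [hι]
      simp only [hinsert]
      ext j
      rw [hw]
      rfl
    refine Set.mem_iUnion.2 ⟨⟨i, b⟩, ⟨z, hzQ, ?_⟩⟩
    rw [hΦ]
    simp only
    rw [hιz]
    exact P_smul_sphere hx1 (inv_pos.2 habs)
  calc μH[d] (sphere (0 : Euc (e+1)) 1) ≤ μH[d] (⋃ p : Fin (e+1) × Bool, Φ p.1 p.2 '' Q) :=
        measure_mono hcover
    _ ≤ ∑' p : Fin (e+1) × Bool, μH[d] (Φ p.1 p.2 '' Q) := measure_iUnion_le _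
    _ < ⊤ := by
        rw [tsum_fintype]
        apply ENNReal.sum_lt_top.2
        intro p _
        calc μH[d] (Φ p.1 p.2 '' Q) ≤ ((2/1) * Real.toNNReal (Real.sqrt e) : ℝ≥0)^d * μH[d] Q :=
              (hΦlip p.1 p.2).hausdorffMeasure_image_le hd0
          _ < ⊤ := ENNReal.mul_lt_top (by
              apply ENNReal.rpow_lt_top_of_nonneg hd0
              exact ENNReal.coe_ne_top) hQvol

lemma sphere_hm_pos (e : ℕ) (he : 1 ≤ e) : 0 < μH[(e:ℝ)] (sphere (0 : Euc (e+1)) 1) := by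
  classical
  set d : ℝ := (e : ℝ) with hd
  have hd0 : 0 ≤ d := by positivity
  have hepos : (0:ℝ) < e := by exact_mod_cast he
  set r : ℝ := (Real.sqrt e)⁻¹ with hr
  have hrpos : 0 < r := by rw [hr]; positivity
  have hr2 : r^2 = 1/e := by
    rw [hr, inv_pow, Real.sq_sqrt hepos.le, one_div]
  set ρ : Euc (e+1) → (Fin e → ℝ) := fun y j => y (Fin.castSucc j) with hρ
  have hρlip : LipschitzWith 1 ρ := by
    apply LipschitzWith.of_dist_le_mul
    intro y y'
    rw [NNReal.coe_one, one_mul]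
    apply dist_pi_le_iff dist_nonneg |>.2
    intro j
    have h1 : |(y - y') (Fin.castSucc j)| ≤ ‖y - y'‖ := coord_le_norm (y - y') _
    rw [dist_eq_norm]
    have h2 : (y - y') (Fin.castSucc j) = y (Fin.castSucc j) - y' (Fin.castSucc j) := rfl
    rw [h2] at h1
    simpa [Real.dist_eq, hρ, dist_eq_norm y y'] using h1
  set Q' : Set (Fin e → ℝ) := Set.pi Set.univ (fun _ => Set.Icc 0 r) with hQ'
  have hsub : Q' ⊆ ρ '' (sphere (0 : Euc (e+1)) 1) := by
    intro z hzQ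
    have hbound : ∀ j, 0 ≤ z j ∧ z j ≤ r := by
      intro j
      have := hzQ j (Set.mem_univ j)
      exact ⟨this.1, this.2⟩
    set s : ℝ := ∑ j : Fin e, (z j)^2 with hs
    have hs0 : 0 ≤ s := Finset.sum_nonneg fun j _ => sq_nonneg _
    have hs1 : s ≤ 1 := by
      calc s ≤ ∑ _j : Fin e, r^2 := Finset.sum_le_sum fun j _ => by
            have := hbound j
            nlinarith [this.1, this.2]
        _ = (e:ℝ) * r^2 := by simp [mul_comm]
        _ = 1 := by rw [hr2]; field_simp
    set y : Euc (e+1) := (WithLp.equiv 2 (Fin (e+1) → ℝ)).symm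
      (Fin.snoc z (Real.sqrt (1 - s))) with hy
    have hycoord : ∀ j : Fin e, y (Fin.castSucc j) = z j := by
      intro j
      simp [hy, PiLp.toLp_apply, Fin.snoc_castSucc]
    have hylast : y (Fin.last e) = Real.sqrt (1 - s) := by
      simp [hy, PiLp.toLp_apply, Fin.snoc_last]
    have hnorm : ‖y‖ = 1 := by
      rw [EuclideanSpace.norm_eq]
      have : ∑ k : Fin (e+1), ‖y k‖^2 = s + (1 - s) := by
        rw [Fin.sum_univ_castSucc]
        congr 1
        · rw [hs]
          apply Finset.sum_congr rfl
          intro j _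
          rw [hycoord j, Real.norm_eq_abs, sq_abs]
        · rw [hylast, Real.norm_eq_abs, sq_abs, Real.sq_sqrt (by linarith)]
      rw [this]
      norm_num
    refine ⟨y, by simpa using hnorm, ?_⟩
    funext j
    rw [hρ]
    exact hycoord j
  have hpi : (μH[d] : Measure (Fin e → ℝ)) = volume := by
    rw [hd]
    simpa [Fintype.card_fin] using (hausdorffMeasure_pi_real (ι := Fin e))
  have hQ'vol : 0 < μH[d] Q' := by
    rw [hpi, hQ', volume_pi_pi]
    rw [Real.volume_Icc]
    simp only [sub_zero]
    rw [Finset.prod_const]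
    apply ENNReal.pow_pos
    rw [ENNReal.ofReal_pos]
    exact hrpos
  have himg : μH[d] (ρ '' (sphere (0 : Euc (e+1)) 1)) ≤
      (1:ℝ≥0)^d * μH[d] (sphere (0 : Euc (e+1)) 1) :=
    hρlip.hausdorffMeasure_image_le hd0 _
  have h2 : 0 < μH[d] (sphere (0 : Euc (e+1)) 1) := by
    by_contra hcon
    push_neg at hcon
    have h3 : μH[d] (sphere (0 : Euc (e+1)) 1) = 0 := le_antisymm hcon zero_le
    have h4 : μH[d] Q' ≤ 0 := by
      calc μH[d] Q' ≤ μH[d] (ρ '' (sphere (0 : Euc (e+1)) 1)) := measure_mono hsub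
        _ ≤ (1:ℝ≥0)^d * μH[d] (sphere (0 : Euc (e+1)) 1) := himg
        _ = 0 := by rw [h3, mul_zero]
    exact absurd (le_antisymm h4 zero_le) hQ'vol.ne'
  exact h2

end SphereMeasure
section Main

open InnerProductSpace
open scoped NNReal

set_option maxHeartbeats 2000000

variable {n : ℕ}

lemma bdry_isCompact (K : StarBody n) : IsCompact K.bdry := by
  rw [bdry_eq_image]
  apply (isCompact_sphere (0 : Euc n) 1).image_of_continuousOn
  have hsub : sphere (0 : Euc n) 1 ⊆ {x : Euc n | x ≠ 0} := fun x hx => sphere_ne0 hx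
  show ContinuousOn (fun x => (1 + K.u x) • x) (sphere (0 : Euc n) 1)
  exact (continuousOn_const.add ((K.smooth.continuousOn).mono hsub)).smul continuousOn_id

lemma gradF_measurable (K : StarBody n) : Measurable (gradient K.Fdef) :=
  ((toDual ℝ (Euc n)).symm.continuous.measurable).comp (measurable_fderiv ℝ K.Fdef)

lemma normal_measurable (K : StarBody n) : Measurable K.normal := by
  show Measurable (fun y => ‖gradient K.Fdef y‖⁻¹ • gradient K.Fdef y)
  exact ((gradF_measurable K).norm.inv).smul (gradF_measurable K)

/-- There are a universal constant `ε₀ > 0` and dimensional constants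
`c(n), C(n) > 0` such that for every bounded star-shaped domain `K ⊆ ℝⁿ` with smooth
boundary and radial profile `u`: if `|ν(y) − y/|y|| < ε₀` for every `y ∈ ∂K`, then
`c(n) ∫_{S^{n-1}} |∇u|²/(1+u)² ≤ ⨍_{∂K} |ν(y) − y/|y||² dH^{n-1}(y)
  ≤ C(n) ∫_{S^{n-1}} |∇u|²/(1+u)²`. -/
theorem normal_deviation_average_comparable :
    ∃ ε₀ : ℝ, 0 < ε₀ ∧ ∀ n : ℕ, ∃ c C : ℝ, 0 < c ∧ 0 < C ∧ ∀ K : StarBody n,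
      (∀ y ∈ K.bdry, ‖K.normal y - ‖y‖⁻¹ • y‖ < ε₀) →
      c * (∫ x in sphere (0 : Euc n) 1,
              ‖gradient K.u x‖ ^ 2 / (1 + K.u x) ^ 2 ∂μH[(n : ℝ) - 1])
          ≤ (⨍ y in K.bdry, ‖K.normal y - ‖y‖⁻¹ • y‖ ^ 2 ∂μH[(n : ℝ) - 1])
        ∧ (⨍ y in K.bdry, ‖K.normal y - ‖y‖⁻¹ • y‖ ^ 2 ∂μH[(n : ℝ) - 1])
          ≤ C * ∫ x in sphere (0 : Euc n) 1,
              ‖gradient K.u x‖ ^ 2 / (1 + K.u x) ^ 2 ∂μH[(n : ℝ) - 1] := by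

  refine ⟨1/2, by norm_num, ?_⟩
  intro n
  by_cases hn0 : n = 0
  · subst hn0
    refine ⟨1, 1, one_pos, one_pos, ?_⟩
    intro K _
    have hze : ∀ x : Euc 0, x = 0 := fun x => Subsingleton.elim x 0
    have hS : sphere (0 : Euc 0) 1 = ∅ := by
      ext x
      simp only [mem_sphere_iff_norm, Set.mem_empty_iff_false, iff_false]
      rw [hze x]
      simp
    have hB : K.bdry = ∅ := by
      ext y
      simp only [Set.mem_empty_iff_false, iff_false]
      rintro ⟨h1, -⟩
      exact h1 (hze y)
    rw [hS, hB, Measure.restrict_empty, integral_zero_measure, average_zero_measure]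
    norm_num
  by_cases hn1 : n = 1
  · subst hn1
    refine ⟨1, 1, one_pos, one_pos, ?_⟩
    intro K _
    have hgrad0 : ∀ z : Euc 1, z ≠ 0 → gradient K.u z = 0 := by
      intro z hz
      have hz0 : z 0 ≠ 0 := by
        intro h0
        apply hz
        have hn : ‖z‖ = 0 := by
          rw [EuclideanSpace.norm_eq, Fin.sum_univ_one, h0]
          simp
        exact norm_eq_zero.1 hn
      have hnz : ‖z‖ = |z 0| := by
        rw [EuclideanSpace.norm_eq, Fin.sum_univ_one, Real.norm_eq_abs,
          Real.sqrt_sq_eq_abs, abs_abs]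
      have hloc : (fun w => K.u w) =ᶠ[nhds z] (fun _ => K.u z) := by
        have hball : Metric.ball z ‖z‖ ∈ nhds z := Metric.ball_mem_nhds z (norm_pos_iff.2 hz)
        filter_upwards [hball] with w hw
        have h1 : ‖w - z‖ < ‖z‖ := by rwa [Metric.mem_ball, dist_eq_norm] at hw
        have h2 : |(w - z) 0| ≤ ‖w - z‖ := coord_le_norm (w - z) 0
        have h3 : (w - z) 0 = w 0 - z 0 := rfl
        have hw0 : |w 0 - z 0| < |z 0| := by
          rw [← h3]
          calc |(w - z) 0| ≤ ‖w - z‖ := h2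
            _ < ‖z‖ := h1
            _ = |z 0| := hnz
        set c : ℝ := w 0 / z 0 with hc
        have hcpos : 0 < c := by
          rcases lt_or_gt_of_ne hz0 with h | h
          · have hw0' : w 0 < 0 := by
              rw [abs_of_neg h] at hw0
              have := (abs_lt.1 hw0).2
              linarith
            rw [hc]
            exact div_pos_of_neg_of_neg hw0' h
          · have hw0' : 0 < w 0 := by
              rw [abs_of_pos h] at hw0
              have := (abs_lt.1 hw0).1
              linarith
            exact div_pos hw0' h
        have hwc : w = c • z := by
          ext j
          have hj : j = 0 := Subsingleton.elim j 0
          subst hj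
          show w 0 = c * z 0
          rw [hc]
          field_simp
        show K.u w = K.u z
        rw [hwc]
        exact K.homog z hz c hcpos
      calc gradient K.u z = gradient (fun _ => K.u z) z :=
            Filter.EventuallyEq.gradient_eq hloc
        _ = 0 := gradient_const z (K.u z)
    have hSzero : ∀ x ∈ sphere (0 : Euc 1) 1,
        ‖gradient K.u x‖ ^ 2 / (1 + K.u x) ^ 2 = (0 : ℝ) := by
      intro x hx
      rw [hgrad0 x (sphere_ne0 hx)]
      simp
    have hBzero : ∀ y ∈ K.bdry, ‖K.normal y - ‖y‖⁻¹ • y‖ ^ 2 = (0 : ℝ) := by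
      intro y hy
      have h1 : gradient K.Fdef y = ‖y‖⁻¹ • y := by
        rw [gradient_Fdef K hy.1, hgrad0 y hy.1, sub_zero]
      have h2 : ‖(‖y‖⁻¹ • y : Euc 1)‖ = 1 := norm_of_sphere (P_mem_sphere hy.1)
      have h3 : K.normal y = ‖y‖⁻¹ • y := by
        show ‖gradient K.Fdef y‖⁻¹ • gradient K.Fdef y = _
        rw [h1, h2]
        simp
      rw [h3, sub_self, norm_zero]
      norm_num
    have hI0 : (∫ x in sphere (0 : Euc 1) 1,
        ‖gradient K.u x‖ ^ 2 / (1 + K.u x) ^ 2 ∂μH[((1:ℕ) : ℝ) - 1]) = 0 := by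
      rw [setIntegral_congr_fun isClosed_sphere.measurableSet hSzero, integral_zero]
    have hA0 : (⨍ y in K.bdry, ‖K.normal y - ‖y‖⁻¹ • y‖ ^ 2 ∂μH[((1:ℕ) : ℝ) - 1]) = 0 := by
      rw [setAverage_eq, setIntegral_congr_fun ((bdry_isCompact K).isClosed.measurableSet) hBzero,
        integral_zero, smul_zero]
    rw [hI0, hA0]
    norm_num
  -- main case : 2 ≤ n
  obtain ⟨e, rfl⟩ : ∃ e, n = e + 1 := ⟨n - 1, by omega⟩
  have he1 : 1 ≤ e := by omega
  have hn2 : 2 ≤ e + 1 := by omega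
  have hexp : ((e + 1 : ℕ) : ℝ) - 1 = ((e : ℕ) : ℝ) := by push_cast; ring
  rw [hexp]
  set d : ℝ := ((e : ℕ) : ℝ) with hd
  have hd0 : 0 ≤ d := by positivity
  set μ : Measure (Euc (e + 1)) := μH[d] with hμ
  set S : Set (Euc (e + 1)) := sphere 0 1 with hSdef
  have hSmeas : MeasurableSet S := isClosed_sphere.measurableSet
  set σ : ℝ≥0∞ := μ S with hσ
  have hσpos : 0 < σ := sphere_hm_pos e he1
  have hσfin : σ < ⊤ := sphere_hm_lt_top e
  set Λ : ℝ≥0∞ := ((6 * Real.exp 4).toNNReal : ℝ≥0∞) with hΛ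
  have hΛ0 : Λ ≠ 0 := by
    rw [hΛ]
    exact_mod_cast (Real.toNNReal_pos.2 (by positivity)).ne'
  have hΛtop : Λ ≠ ⊤ := ENNReal.coe_ne_top
  have hΛd0 : Λ ^ d ≠ 0 := (ENNReal.rpow_pos (pos_iff_ne_zero.2 hΛ0) hΛtop).ne'
  have hΛdtop : Λ ^ d ≠ ⊤ := ENNReal.rpow_ne_top_of_nonneg hd0 hΛtop
  set cE : ℝ≥0∞ := (2 * Λ ^ d * σ)⁻¹ with hcE
  set CE : ℝ≥0∞ := 2 * Λ ^ d * σ⁻¹ with hCE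
  have h2ne : (2 : ℝ≥0∞) ≠ 0 := by norm_num
  have h2top : (2 : ℝ≥0∞) ≠ ⊤ := by norm_num
  have hcE0 : cE ≠ 0 := by
    rw [hcE]
    apply ENNReal.inv_ne_zero.2
    apply ENNReal.mul_ne_top (ENNReal.mul_ne_top h2top hΛdtop) hσfin.ne
  have hcEtop : cE ≠ ⊤ := by
    rw [hcE]
    apply ENNReal.inv_ne_top.2
    exact mul_ne_zero (mul_ne_zero h2ne hΛd0) hσpos.ne'
  have hCE0 : CE ≠ 0 := by
    rw [hCE]
    exact mul_ne_zero (mul_ne_zero h2ne hΛd0) (ENNReal.inv_ne_zero.2 hσfin.ne)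
  have hCEtop : CE ≠ ⊤ := by
    rw [hCE]
    exact ENNReal.mul_ne_top (ENNReal.mul_ne_top h2top hΛdtop) (ENNReal.inv_ne_top.2 hσpos.ne')
  refine ⟨cE.toReal, CE.toReal, ENNReal.toReal_pos hcE0 hcEtop, ENNReal.toReal_pos hCE0 hCEtop, ?_⟩
  intro K hyp
  -- basic pointwise facts
  have hSsub : S ⊆ {x : Euc (e + 1) | x ≠ 0} := fun x hx => sphere_ne0 hx
  set g : Euc (e + 1) → ℝ := fun x => ‖gradient K.u x‖ ^ 2 / (1 + K.u x) ^ 2 with hg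
  have hg_nonneg : ∀ x, 0 ≤ g x := fun x => by positivity
  have hmsq : ∀ y ∈ K.bdry, ‖K.normal y - ‖y‖⁻¹ • y‖ ^ 2 < 1 / 4 := by
    intro y hy
    have h1 := hyp y hy
    nlinarith [norm_nonneg (K.normal y - ‖y‖⁻¹ • y)]
  have hkey : ∀ x ∈ S, ‖K.normal (K.T x) - ‖K.T x‖⁻¹ • K.T x‖ ^ 2
      = 2 - 2 / Real.sqrt (1 + g x) := fun x hx => normal_dev_eq K (norm_of_sphere hx)
  have hg1 : ∀ x ∈ S, g x ≤ 1 := by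
    intro x hx
    apply phi_small (hg_nonneg x)
    rw [← hkey x hx]
    exact hmsq _ (T_mem_bdry K (norm_of_sphere hx))
  have hml : ∀ x ∈ S, g x / 2 ≤ ‖K.normal (K.T x) - ‖K.T x‖⁻¹ • K.T x‖ ^ 2 := by
    intro x hx
    rw [hkey x hx]
    exact phi_ge (hg_nonneg x) (hg1 x hx)
  have hmu : ∀ x ∈ S, ‖K.normal (K.T x) - ‖K.T x‖⁻¹ • K.T x‖ ^ 2 ≤ g x := by
    intro x hx
    rw [hkey x hx]
    exact phi_le (hg_nonneg x)
  have hgradS : ∀ x : Euc (e + 1), ‖x‖ = 1 → ‖gradient K.u x‖ ≤ 1 + K.u x := by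
    intro x hx
    have hxS : x ∈ S := by
      rw [hSdef, mem_sphere_zero_iff_norm]
      exact hx
    have h1 := hg1 x hxS
    have htp := tpos K x
    rw [hg] at h1
    rw [div_le_one (by positivity)] at h1
    nlinarith [norm_nonneg (gradient K.u x)]
  have hb := grad_bound_all K hgradS
  -- min and max of 1 + u on the sphere
  have hSne : S.Nonempty := by
    refine ⟨EuclideanSpace.single 0 1, ?_⟩
    rw [hSdef, mem_sphere_zero_iff_norm, EuclideanSpace.norm_single]
    norm_num
  have hucont : ContinuousOn (fun x => 1 + K.u x) S :=
    continuousOn_const.add ((K.smooth.continuousOn).mono hSsub)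
  obtain ⟨xm, hxmS, hxmin⟩ := (isCompact_sphere (0 : Euc (e+1)) 1).exists_isMinOn hSne hucont
  obtain ⟨xM, hxMS, hxmax⟩ := (isCompact_sphere (0 : Euc (e+1)) 1).exists_isMaxOn hSne hucont
  set m₀ : ℝ := 1 + K.u xm with hm₀
  set M : ℝ := 1 + K.u xM with hM
  have hm₀pos : 0 < m₀ := tpos K xm
  have hMpos : 0 < M := tpos K xM
  have hmin : ∀ x ∈ S, m₀ ≤ 1 + K.u x := fun x hx => hxmin hx
  have hmax : ∀ x ∈ S, 1 + K.u x ≤ M := fun x hx => hxmax hx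
  have hmax' : ∀ x : Euc (e+1), ‖x‖ = 1 → 1 + K.u x ≤ M := by
    intro x hx
    apply hmax
    rw [hSdef, mem_sphere_zero_iff_norm]
    exact hx
  have hMm : M ≤ Real.exp 4 * m₀ := by
    have hosc := log_osc K hn2 hb (norm_of_sphere hxmS) (norm_of_sphere hxMS)
    have h1 : Real.log M ≤ Real.log m₀ + 4 := by
      have := (abs_le.1 hosc).2
      rw [hM, hm₀]
      linarith
    calc M = Real.exp (Real.log M) := (Real.exp_log hMpos).symm
      _ ≤ Real.exp (Real.log m₀ + 4) := Real.exp_le_exp.2 h1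
      _ = Real.exp 4 * m₀ := by rw [Real.exp_add, Real.exp_log hm₀pos]; ring
  -- Lipschitz bound for T on the sphere
  set cT : ℝ := 3 * M with hcT
  have hcTpos : 0 < cT := by rw [hcT]; positivity
  have hTlip : LipschitzOnWith cT.toNNReal K.T S := by
    rw [lipschitzOnWith_iff_dist_le_mul]
    intro x hx x' hx'
    rw [dist_eq_norm, dist_eq_norm]
    have hx1 : ‖x‖ = 1 := norm_of_sphere hx
    have hx1' : ‖x'‖ = 1 := norm_of_sphere hx'
    have hid : K.T x - K.T x' = (1 + K.u x) • (x - x') + (K.u x - K.u x') • x' := by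
      show (1 + K.u x) • x - (1 + K.u x') • x' = _
      have h5 : (1 + K.u x') = (1 + K.u x) - (K.u x - K.u x') := by ring
      rw [h5, sub_smul, smul_sub, sub_smul]
      abel
    have e1 : ‖(1 + K.u x) • (x - x')‖ ≤ M * ‖x - x'‖ := by
      rw [norm_smul, Real.norm_eq_abs, abs_of_pos (tpos K x)]
      exact mul_le_mul_of_nonneg_right (hmax x hx) (norm_nonneg _)
    have e2 : ‖(K.u x - K.u x') • x'‖ ≤ 2 * M * ‖x - x'‖ := by
      rw [norm_smul, Real.norm_eq_abs, hx1', mul_one]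
      exact u_lip K M hMpos hgradS hmax' hx1' hx1
    have h1 : ‖K.T x - K.T x'‖ ≤ M * ‖x - x'‖ + 2 * M * ‖x - x'‖ := by
      rw [hid]
      exact (norm_add_le _ _).trans (by linarith)
    have hcoe : (cT.toNNReal : ℝ) = cT := Real.coe_toNNReal _ hcTpos.le
    rw [hcoe, hcT]
    linarith
  -- the radial projection map
  set Pm : Euc (e + 1) → Euc (e + 1) := fun y => ‖y‖⁻¹ • y with hPmdef
  have hPmmeas : Measurable Pm := (measurable_norm.inv).smul measurable_id
  have hBmeas : MeasurableSet K.bdry := (bdry_isCompact K).isClosed.measurableSet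
  have hm₀nn : (0:ℝ) < m₀.toNNReal := Real.toNNReal_pos.2 hm₀pos
  have hBsub : K.bdry ⊆ {y : Euc (e + 1) | ((m₀.toNNReal : ℝ≥0) : ℝ) ≤ ‖y‖} := by
    intro y hy
    have h1 : ‖y‖ = 1 + K.u (‖y‖⁻¹ • y) := by rw [u_P K hy.1]; exact hy.2
    have h2 := hmin _ (P_mem_sphere hy.1)
    simp only [Set.mem_setOf_eq]
    rw [Real.coe_toNNReal _ hm₀pos.le, h1]
    exact h2
  have hPlipB : LipschitzOnWith (2 / m₀.toNNReal) Pm K.bdry :=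
    (lipschitzOnWith_P (by exact_mod_cast hm₀nn)).mono hBsub
  -- set identity and pushforward measure
  have hsetid : ∀ A : Set (Euc (e + 1)), Pm ⁻¹' A ∩ K.bdry = K.T '' (A ∩ S) := by
    intro A
    ext y
    constructor
    · rintro ⟨hyA, hyB⟩
      exact ⟨Pm y, ⟨hyA, P_mem_sphere hyB.1⟩, T_P K hyB⟩
    · rintro ⟨x, ⟨hxA, hxS⟩, rfl⟩
      have hx1 := norm_of_sphere hxS
      refine ⟨?_, T_mem_bdry K hx1⟩
      show Pm (K.T x) ∈ A
      have : Pm (K.T x) = x := P_T K hx1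
      rw [this]
      exact hxA
  set ν : Measure (Euc (e + 1)) := (μ.restrict K.bdry).map Pm with hν
  have hν_apply : ∀ A : Set (Euc (e + 1)), MeasurableSet A → ν A = μ (K.T '' (A ∩ S)) := by
    intro A hA
    rw [hν, Measure.map_apply hPmmeas hA, Measure.restrict_apply (hPmmeas hA), hsetid]
  set cc : ℝ≥0∞ := ((2 / m₀.toNNReal : ℝ≥0) : ℝ≥0∞) ^ d with hccdef
  set k₁ : ℝ≥0∞ := cc⁻¹ with hk₁
  set k₂ : ℝ≥0∞ := ((cT.toNNReal : ℝ≥0)) ^ d with hk₂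
  have hcPn0 : (2 / m₀.toNNReal : ℝ≥0) ≠ 0 := by
    apply div_ne_zero (by norm_num)
    exact_mod_cast hm₀nn.ne'
  have hcc0 : cc ≠ 0 := by
    rw [hccdef]
    apply (ENNReal.rpow_pos _ ENNReal.coe_ne_top).ne'
    exact_mod_cast pos_iff_ne_zero.2 hcPn0
  have hcctop : cc ≠ ⊤ := by
    rw [hccdef]
    exact ENNReal.rpow_ne_top_of_nonneg hd0 ENNReal.coe_ne_top
  have hk₁0 : k₁ ≠ 0 := by rw [hk₁]; exact ENNReal.inv_ne_zero.2 hcctop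
  have hk₁top : k₁ ≠ ⊤ := by rw [hk₁]; exact ENNReal.inv_ne_top.2 hcc0
  have hcT0' : (cT.toNNReal : ℝ≥0) ≠ 0 := by
    exact_mod_cast (Real.toNNReal_pos.2 hcTpos).ne'
  have hk₂0 : k₂ ≠ 0 := by
    rw [hk₂]
    apply (ENNReal.rpow_pos _ ENNReal.coe_ne_top).ne'
    exact_mod_cast pos_iff_ne_zero.2 hcT0'
  have hk₂top : k₂ ≠ ⊤ := by
    rw [hk₂]
    exact ENNReal.rpow_ne_top_of_nonneg hd0 ENNReal.coe_ne_top
  have himg_up : ∀ A : Set (Euc (e + 1)), μ (K.T '' (A ∩ S)) ≤ k₂ * μ (A ∩ S) :=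
    fun A => (hTlip.mono Set.inter_subset_right).hausdorffMeasure_image_le hd0
  have himg_low : ∀ A : Set (Euc (e + 1)), μ (A ∩ S) ≤ cc * μ (K.T '' (A ∩ S)) := by
    intro A
    have him : Pm '' (K.T '' (A ∩ S)) = A ∩ S := by
      rw [← Set.image_comp]
      have heq : Set.EqOn (Pm ∘ K.T) id (A ∩ S) := by
        intro x hx
        show Pm (K.T x) = x
        exact P_T K (norm_of_sphere hx.2)
      rw [Set.image_congr heq, Set.image_id]
    have hTsub : K.T '' (A ∩ S) ⊆ K.bdry := by
      rintro y ⟨x, hx, rfl⟩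
      exact T_mem_bdry K (norm_of_sphere hx.2)
    have h1 := (hPlipB.mono hTsub).hausdorffMeasure_image_le hd0
    rw [him] at h1
    exact h1
  have hν_le : ν ≤ k₂ • μ.restrict S := by
    rw [Measure.le_iff]
    intro A hA
    rw [hν_apply A hA, Measure.smul_apply, Measure.restrict_apply hA, smul_eq_mul]
    exact himg_up A
  have hν_ge : k₁ • μ.restrict S ≤ ν := by
    rw [Measure.le_iff]
    intro A hA
    rw [hν_apply A hA, Measure.smul_apply, Measure.restrict_apply hA, smul_eq_mul]
    calc k₁ * μ (A ∩ S) ≤ k₁ * (cc * μ (K.T '' (A ∩ S))) :=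
          mul_le_mul_right (himg_low A) _
      _ = μ (K.T '' (A ∩ S)) := by
          rw [hk₁, ← mul_assoc, ENNReal.inv_mul_cancel hcc0 hcctop, one_mul]
  -- integrals
  set G : Euc (e + 1) → ℝ≥0∞ := fun z => ENNReal.ofReal (g z) with hGdef
  have hgradcont : ContinuousOn (gradient K.u) {x : Euc (e + 1) | x ≠ 0} := by
    have h1 := K.smooth.continuousOn_fderiv_of_isOpen isOpen_ne0 (by simp)
    exact (toDual ℝ (Euc (e + 1))).symm.continuous.comp_continuousOn h1
  have hgcont : ContinuousOn g {x : Euc (e + 1) | x ≠ 0} := by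
    apply ContinuousOn.div
    · exact (hgradcont.norm).pow 2
    · exact (continuousOn_const.add K.smooth.continuousOn).pow 2
    · intro x _
      exact pow_ne_zero 2 (tpos K x).ne'
  have hgS : ContinuousOn g S := hgcont.mono hSsub
  have hGae : AEMeasurable G (μ.restrict S) :=
    (ENNReal.continuous_ofReal.comp_continuousOn hgS).aemeasurable hSmeas
  have hGaeν : AEMeasurable G ν := (hGae.smul_measure k₂).mono_measure hν_le
  set L : ℝ≥0∞ := ∫⁻ x in S, G x ∂μ with hL
  set IB : ℝ≥0∞ := ∫⁻ y in K.bdry, G (Pm y) ∂μ with hIB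
  set Jm : ℝ≥0∞ := ∫⁻ y in K.bdry,
    ENNReal.ofReal (‖K.normal y - ‖y‖⁻¹ • y‖ ^ 2) ∂μ with hJm
  have hmap : IB = ∫⁻ z, G z ∂ν := by
    rw [hν, lintegral_map' hGaeν hPmmeas.aemeasurable, hIB]
  have hIB_le : IB ≤ k₂ * L := by
    rw [hmap]
    calc ∫⁻ z, G z ∂ν ≤ ∫⁻ z, G z ∂(k₂ • μ.restrict S) := lintegral_mono' hν_le le_rfl
      _ = k₂ * L := by rw [lintegral_smul_measure, smul_eq_mul]
  have hIB_ge : k₁ * L ≤ IB := by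
    rw [hmap]
    calc k₁ * L = ∫⁻ z, G z ∂(k₁ • μ.restrict S) := by rw [lintegral_smul_measure, smul_eq_mul]
      _ ≤ ∫⁻ z, G z ∂ν := lintegral_mono' hν_ge le_rfl
  have hptwise : ∀ y ∈ K.bdry,
      ENNReal.ofReal (‖K.normal y - ‖y‖⁻¹ • y‖ ^ 2) ≤ G (Pm y)
      ∧ G (Pm y) ≤ 2 * ENNReal.ofReal (‖K.normal y - ‖y‖⁻¹ • y‖ ^ 2) := by
    intro y hy
    have hxS : Pm y ∈ S := P_mem_sphere hy.1
    have hTP : K.T (Pm y) = y := T_P K hy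
    have h1 := hmu (Pm y) hxS
    have h2 := hml (Pm y) hxS
    rw [hTP] at h1 h2
    constructor
    · exact ENNReal.ofReal_le_ofReal h1
    · calc G (Pm y) = ENNReal.ofReal (g (Pm y)) := rfl
        _ ≤ ENNReal.ofReal (2 * ‖K.normal y - ‖y‖⁻¹ • y‖ ^ 2) :=
            ENNReal.ofReal_le_ofReal (by linarith)
        _ = 2 * ENNReal.ofReal (‖K.normal y - ‖y‖⁻¹ • y‖ ^ 2) := by
            rw [ENNReal.ofReal_mul (by norm_num)]
            norm_num
  have hJ_le : Jm ≤ IB := by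
    apply lintegral_mono_ae
    apply (ae_restrict_iff' hBmeas).2
    exact Filter.Eventually.of_forall (fun y hy => (hptwise y hy).1)
  have hIB_le2 : IB ≤ 2 * Jm := by
    rw [hJm, ← lintegral_const_mul' _ _ h2top]
    apply lintegral_mono_ae
    apply (ae_restrict_iff' hBmeas).2
    exact Filter.Eventually.of_forall (fun y hy => (hptwise y hy).2)
  -- measure of the boundary
  have hνuniv : ν Set.univ = μ K.bdry := by
    rw [hν, Measure.map_apply hPmmeas MeasurableSet.univ, Set.preimage_univ,
      Measure.restrict_apply_univ]
  have hμB_le : μ K.bdry ≤ k₂ * σ := by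
    rw [← hνuniv]
    have h1 := Measure.le_iff.1 hν_le Set.univ MeasurableSet.univ
    rwa [Measure.smul_apply, Measure.restrict_apply_univ, smul_eq_mul] at h1
  have hμB_ge : k₁ * σ ≤ μ K.bdry := by
    rw [← hνuniv]
    have h1 := Measure.le_iff.1 hν_ge Set.univ MeasurableSet.univ
    rwa [Measure.smul_apply, Measure.restrict_apply_univ, smul_eq_mul] at h1
  -- finiteness
  have hL_le : L ≤ σ := by
    have h1 : ∫⁻ x in S, G x ∂μ ≤ ∫⁻ _x in S, 1 ∂μ := by
      apply lintegral_mono_ae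
      apply (ae_restrict_iff' hSmeas).2
      apply Filter.Eventually.of_forall
      intro x hx
      calc G x = ENNReal.ofReal (g x) := rfl
        _ ≤ ENNReal.ofReal 1 := ENNReal.ofReal_le_ofReal (hg1 x hx)
        _ = 1 := ENNReal.ofReal_one
    calc L ≤ ∫⁻ _x in S, 1 ∂μ := h1
      _ = σ := by rw [lintegral_one, Measure.restrict_apply_univ]
  have hLfin : L ≠ ⊤ := (lt_of_le_of_lt hL_le hσfin).ne
  have hk₂L : k₂ * L < ⊤ := ENNReal.mul_lt_top hk₂top.lt_top hLfin.lt_top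
  have hJfin : Jm ≠ ⊤ := (lt_of_le_of_lt (hJ_le.trans hIB_le) hk₂L).ne
  have hμBfin : μ K.bdry ≠ ⊤ :=
    (lt_of_le_of_lt hμB_le (ENNReal.mul_lt_top hk₂top.lt_top hσfin)).ne
  have hμB0 : μ K.bdry ≠ 0 := by
    intro h0
    have h1 : k₁ * σ = 0 := le_antisymm (h0 ▸ hμB_ge) zero_le
    rcases mul_eq_zero.1 h1 with h | h
    · exact hk₁0 h
    · exact hσpos.ne' h
  -- comparison of the constants
  have hprod : ((cT.toNNReal : ℝ≥0) : ℝ≥0∞) * ((2 / m₀.toNNReal : ℝ≥0) : ℝ≥0∞) ≤ Λ := by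
    rw [hΛ, ← ENNReal.coe_mul, ENNReal.coe_le_coe, ← NNReal.coe_le_coe]
    rw [NNReal.coe_mul, NNReal.coe_div, Real.coe_toNNReal _ hcTpos.le,
      Real.coe_toNNReal _ hm₀pos.le, Real.coe_toNNReal _ (by positivity : (0:ℝ) ≤ 6 * Real.exp 4)]
    push_cast
    rw [hcT]
    have hq : 3 * M * (2 / m₀) = 6 * M / m₀ := by ring
    rw [hq, div_le_iff₀ hm₀pos]
    nlinarith [hMm, Real.exp_pos (4:ℝ)]
  have hrat : cc * k₂ ≤ Λ ^ d := by
    rw [hccdef, hk₂, ← ENNReal.mul_rpow_of_nonneg _ _ hd0]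
    apply ENNReal.rpow_le_rpow _ hd0
    rw [mul_comm]
    exact hprod
  -- convert to real numbers
  set lR : ℝ := L.toReal with hlR
  set jR : ℝ := Jm.toReal with hjR
  set bR : ℝ := (μ K.bdry).toReal with hbR
  set sR : ℝ := σ.toReal with hsR
  set ccR : ℝ := cc.toReal with hccR
  set kR₂ : ℝ := k₂.toReal with hkR₂
  set ΛdR : ℝ := (Λ ^ d).toReal with hΛdR
  have hsRpos : 0 < sR := ENNReal.toReal_pos hσpos.ne' hσfin.ne
  have hbRpos : 0 < bR := ENNReal.toReal_pos hμB0 hμBfin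
  have hccRpos : 0 < ccR := ENNReal.toReal_pos hcc0 hcctop
  have hkR₂pos : 0 < kR₂ := ENNReal.toReal_pos hk₂0 hk₂top
  have hΛdRpos : 0 < ΛdR := ENNReal.toReal_pos hΛd0 hΛdtop
  have hlR0 : 0 ≤ lR := ENNReal.toReal_nonneg
  have hjR0 : 0 ≤ jR := ENNReal.toReal_nonneg
  have hkR₁ : k₁.toReal = ccR⁻¹ := by rw [hk₁, ENNReal.toReal_inv, hccR]
  have rL1 : ccR⁻¹ * lR ≤ 2 * jR := by
    have h1 : k₁ * L ≤ 2 * Jm := hIB_ge.trans hIB_le2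
    have h2 := ENNReal.toReal_mono (ENNReal.mul_ne_top h2top hJfin) h1
    rwa [ENNReal.toReal_mul, ENNReal.toReal_mul, hkR₁, ENNReal.toReal_ofNat] at h2
  have rL2 : jR ≤ kR₂ * lR := by
    have h2 := ENNReal.toReal_mono hk₂L.ne (hJ_le.trans hIB_le)
    rwa [ENNReal.toReal_mul] at h2
  have rB1 : ccR⁻¹ * sR ≤ bR := by
    have h2 := ENNReal.toReal_mono hμBfin hμB_ge
    rwa [ENNReal.toReal_mul, hkR₁] at h2
  have rB2 : bR ≤ kR₂ * sR := by
    have h2 := ENNReal.toReal_mono (ENNReal.mul_ne_top hk₂top hσfin.ne) hμB_le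
    rwa [ENNReal.toReal_mul] at h2
  have rK : ccR * kR₂ ≤ ΛdR := by
    have h2 := ENNReal.toReal_mono hΛdtop hrat
    rwa [ENNReal.toReal_mul] at h2
  have hkk : kR₂ ≤ ccR⁻¹ * ΛdR := by
    rw [← mul_le_mul_iff_right₀ hccRpos, ← mul_assoc, mul_inv_cancel₀ hccRpos.ne', one_mul]
    calc ccR * kR₂ ≤ ΛdR := rK
      _ = ΛdR := rfl
  have hcEr : cE.toReal = (2 * ΛdR * sR)⁻¹ := by
    rw [hcE, ENNReal.toReal_inv, ENNReal.toReal_mul, ENNReal.toReal_mul,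
      ENNReal.toReal_ofNat, hΛdR, hsR]
  have hCEr : CE.toReal = 2 * ΛdR * sR⁻¹ := by
    rw [hCE, ENNReal.toReal_mul, ENNReal.toReal_mul, ENNReal.toReal_ofNat,
      ENNReal.toReal_inv, hΛdR, hsR]
  -- identification of the integrals in the goal
  have hInt_eq : (∫ x in S, ‖gradient K.u x‖ ^ 2 / (1 + K.u x) ^ 2 ∂μ) = lR := by
    have h1 : (∫ x in S, g x ∂μ)
        = (∫⁻ x in S, ENNReal.ofReal (g x) ∂μ).toReal := by
      apply integral_eq_lintegral_of_nonneg_ae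
      · exact Filter.Eventually.of_forall (fun x => hg_nonneg x)
      · exact (hgS.aestronglyMeasurable hSmeas)
    rw [hg] at h1
    rw [h1, hlR, hL]
  have hmmeas : AEStronglyMeasurable (fun y => ‖K.normal y - ‖y‖⁻¹ • y‖ ^ 2)
      (μ.restrict K.bdry) :=
    (((normal_measurable K).sub hPmmeas).norm.pow_const 2).aestronglyMeasurable
  have hAvg_eq : (⨍ y in K.bdry, ‖K.normal y - ‖y‖⁻¹ • y‖ ^ 2 ∂μ) = bR⁻¹ * jR := by
    rw [setAverage_eq, integral_eq_lintegral_of_nonneg_ae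
      (Filter.Eventually.of_forall (fun y => sq_nonneg _)) hmmeas, smul_eq_mul, hbR, hjR, hJm, measureReal_def]
  rw [hInt_eq, hAvg_eq]
  constructor
  · -- lower bound
    rw [hcEr]
    have key : (2 * ΛdR * sR)⁻¹ * lR * bR ≤ jR := by
      calc (2 * ΛdR * sR)⁻¹ * lR * bR ≤ (2 * ΛdR * sR)⁻¹ * lR * (kR₂ * sR) := by
            apply mul_le_mul_of_nonneg_left rB2 (by positivity)
        _ = lR * kR₂ / (2 * ΛdR) := by field_simp
        _ ≤ jR := by
            rw [div_le_iff₀ (by positivity)]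
            calc lR * kR₂ ≤ lR * (ccR⁻¹ * ΛdR) := mul_le_mul_of_nonneg_left hkk hlR0
              _ = (ccR⁻¹ * lR) * ΛdR := by ring
              _ ≤ (2 * jR) * ΛdR := mul_le_mul_of_nonneg_right rL1 hΛdRpos.le
              _ = jR * (2 * ΛdR) := by ring
    have h6 : (2 * ΛdR * sR)⁻¹ * lR ≤ jR / bR := (le_div_iff₀ hbRpos).2 key
    rwa [div_eq_mul_inv, mul_comm jR] at h6
  · -- upper bound
    rw [hCEr]
    have key : jR ≤ (2 * ΛdR * sR⁻¹ * lR) * bR := by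
      calc jR ≤ kR₂ * lR := rL2
        _ ≤ (ccR⁻¹ * ΛdR) * lR := mul_le_mul_of_nonneg_right hkk hlR0
        _ ≤ (2 * ΛdR * sR⁻¹ * lR) * (ccR⁻¹ * sR) := by
            have hx : (2 * ΛdR * sR⁻¹ * lR) * (ccR⁻¹ * sR) = 2 * ((ccR⁻¹ * ΛdR) * lR) := by
              field_simp
            rw [hx]
            nlinarith [mul_nonneg (mul_nonneg (inv_nonneg.2 hccRpos.le) hΛdRpos.le) hlR0]
        _ ≤ (2 * ΛdR * sR⁻¹ * lR) * bR := by
            apply mul_le_mul_of_nonneg_left rB1 (by positivity)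
    have h6 : jR / bR ≤ 2 * ΛdR * sR⁻¹ * lR := (div_le_iff₀ hbRpos).2 key
    rwa [div_eq_mul_inv, mul_comm jR] at h6


end Main
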